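/- Every open leaf of a capped unwinding is a normal sequent. -/

import Mathlib

set_option maxHeartbeats 1000000

/-! ### Syntax of PDL -/

mutual
inductive PDLFormula : Type
  | bot : PDLFormula
  | atom : ℕ → PDLFormula
  | and : PDLFormula → PDLFormula → PDLFormula
  | or : PDLFormula → PDLFormula → PDLFormula
  | imp : PDLFormula → PDLFormula → PDLFormula
  | box : PDLProgram → PDLFormula → PDLFormula
  deriving DecidableEq

inductive PDLProgram : Type
  | atom : ℕ → PDLProgram
  | comp : PDLProgram → PDLProgram → PDLProgram
  | choice : PDLProgram → PDLProgram → PDLProgram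
  | test : PDLFormula → PDLProgram
  | star : PDLProgram → PDLProgram
  deriving DecidableEq
end

/-! ### Semantics of PDL -/

structure PDLModel where
  State : Type
  propI : ℕ → Set State
  progI : ℕ → Set (State × State)

mutual
def PDLFormula.sem (m : PDLModel) : PDLFormula → Set m.State
  | .bot => ∅
  | .atom p => m.propI p
  | .and φ ψ => PDLFormula.sem m φ ∩ PDLFormula.sem m ψ
  | .or φ ψ => PDLFormula.sem m φ ∪ PDLFormula.sem m ψ
  | .imp φ ψ => (PDLFormula.sem m φ)ᶜ ∪ PDLFormula.sem m ψ
  | .box α φ => { s | ∀ t, (s, t) ∈ PDLProgram.sem m α → t ∈ PDLFormula.sem m φ }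

def PDLProgram.sem (m : PDLModel) : PDLProgram → Set (m.State × m.State)
  | .atom a => m.progI a
  | .comp α β => { p | ∃ t, (p.1, t) ∈ PDLProgram.sem m α ∧ (t, p.2) ∈ PDLProgram.sem m β }
  | .choice α β => PDLProgram.sem m α ∪ PDLProgram.sem m β
  | .test φ => { p | p.1 = p.2 ∧ p.1 ∈ PDLFormula.sem m φ }
  | .star α => { p | Relation.ReflTransGen (fun s t => (s, t) ∈ PDLProgram.sem m α) p.1 p.2 }
end

/-! ### Labelled sequents -/

abbrev Label := ℕ

inductive SeqElem : Type
  | rel : Label → ℕ → Label → SeqElem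
  | lab : Label → PDLFormula → SeqElem
  deriving DecidableEq

structure Sequent where
  ant : Finset SeqElem
  suc : Finset SeqElem

def SeqElem.sat (m : PDLModel) (v : Label → m.State) : SeqElem → Prop
  | .rel x a y => (v x, v y) ∈ m.progI a
  | .lab x φ => v x ∈ PDLFormula.sem m φ

def Sequent.valid (S : Sequent) : Prop :=
  ∀ (m : PDLModel) (v : Label → m.State),
    (∀ A ∈ S.ant, A.sat m v) → ∃ B ∈ S.suc, B.sat m v

def Sequent.falsifiedBy (S : Sequent) (m : PDLModel) (v : Label → m.State) : Prop :=
  (∀ A ∈ S.ant, A.sat m v) ∧ ∀ B ∈ S.suc, ¬ B.sat m v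

/-! ### Labels, starred labels, reachability -/

def SeqElem.labels : SeqElem → Finset Label
  | .rel x _ y => {x, y}
  | .lab x _ => {x}

def labs (Γ : Finset SeqElem) : Finset Label := Γ.biUnion SeqElem.labels

def starred (Δ : Finset SeqElem) : Set Label :=
  { x | ∃ α φ, SeqElem.lab x (PDLFormula.box (PDLProgram.star α) φ) ∈ Δ }

def relStep (Γ : Finset SeqElem) (x y : Label) : Prop := ∃ a, SeqElem.rel x a y ∈ Γ

/-- `x` reaches `y` through a (possibly empty) chain of relational atoms of `Γ`. -/
def reaches (Γ : Finset SeqElem) : Label → Label → Prop := Relation.ReflTransGen (relStep Γ)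

/-- A set of relational atoms is acyclic when no label reaches itself via a nonempty chain. -/
def RelAcyclic (Γ : Finset SeqElem) : Prop := ∀ x, ¬ Relation.TransGen (relStep Γ) x x

def Sequent.Acyclic (S : Sequent) : Prop := RelAcyclic S.ant

/-! ### Classification of formulas, normal sequents -/

def PDLFormula.isAtomic : PDLFormula → Prop
  | .bot => True
  | .atom _ => True
  | _ => False

def PDLFormula.isIterated : PDLFormula → Prop
  | .box (.star _) _ => True
  | _ => False

def SeqElem.isRel : SeqElem → Prop
  | .rel _ _ _ => True
  | _ => False

def NormalSeq (S : Sequent) : Prop :=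
  (∀ A ∈ S.ant, A ∉ S.suc) ∧
  (∀ A ∈ S.suc, ∃ x φ, A = SeqElem.lab x φ ∧ (φ.isAtomic ∨ φ.isIterated)) ∧
  (∀ A ∈ S.ant, A.isRel ∨ ∃ x φ, A = SeqElem.lab x φ ∧
      (φ.isAtomic ∨ ∃ a ψ, φ = PDLFormula.box (PDLProgram.atom a) ψ ∧
        ∀ y, SeqElem.rel x a y ∉ S.ant))

/-! ### Test-freeness and subformulas -/

mutual
def PDLFormula.TestFree : PDLFormula → Prop
  | .bot => True
  | .atom _ => True
  | .and φ ψ => PDLFormula.TestFree φ ∧ PDLFormula.TestFree ψ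
  | .or φ ψ => PDLFormula.TestFree φ ∧ PDLFormula.TestFree ψ
  | .imp φ ψ => PDLFormula.TestFree φ ∧ PDLFormula.TestFree ψ
  | .box α φ => PDLProgram.TestFree α ∧ PDLFormula.TestFree φ

def PDLProgram.TestFree : PDLProgram → Prop
  | .atom _ => True
  | .comp α β => PDLProgram.TestFree α ∧ PDLProgram.TestFree β
  | .choice α β => PDLProgram.TestFree α ∧ PDLProgram.TestFree β
  | .test _ => False
  | .star α => PDLProgram.TestFree α
end

def SeqElem.TestFree : SeqElem → Prop
  | .rel _ _ _ => True
  | .lab _ φ => φ.TestFree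

def Sequent.TestFree (S : Sequent) : Prop :=
  (∀ A ∈ S.ant, A.TestFree) ∧ (∀ A ∈ S.suc, A.TestFree)

mutual
inductive Subf : PDLFormula → PDLFormula → Prop
  | refl (φ) : Subf φ φ
  | andl {χ φ ψ} : Subf χ φ → Subf χ (PDLFormula.and φ ψ)
  | andr {χ φ ψ} : Subf χ ψ → Subf χ (PDLFormula.and φ ψ)
  | orl {χ φ ψ} : Subf χ φ → Subf χ (PDLFormula.or φ ψ)
  | orr {χ φ ψ} : Subf χ ψ → Subf χ (PDLFormula.or φ ψ)
  | impl {χ φ ψ} : Subf χ φ → Subf χ (PDLFormula.imp φ ψ)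
  | impr {χ φ ψ} : Subf χ ψ → Subf χ (PDLFormula.imp φ ψ)
  | boxf {χ α φ} : Subf χ φ → Subf χ (PDLFormula.box α φ)
  | boxp {χ α φ} : SubfP χ α → Subf χ (PDLFormula.box α φ)

inductive SubfP : PDLFormula → PDLProgram → Prop
  | compl {χ α β} : SubfP χ α → SubfP χ (PDLProgram.comp α β)
  | compr {χ α β} : SubfP χ β → SubfP χ (PDLProgram.comp α β)
  | choicel {χ α β} : SubfP χ α → SubfP χ (PDLProgram.choice α β)
  | choicer {χ α β} : SubfP χ β → SubfP χ (PDLProgram.choice α β)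
  | test {χ φ} : Subf χ φ → SubfP χ (PDLProgram.test φ)
  | star {χ α} : SubfP χ α → SubfP χ (PDLProgram.star α)
end

/-! ### Label substitution -/

def substLabel (x y z : Label) : Label := if z = x then y else z

def SeqElem.subst (x y : Label) : SeqElem → SeqElem
  | .rel z a w => .rel (substLabel x y z) a (substLabel x y w)
  | .lab z φ => .lab (substLabel x y z) φ
/-! ### Trace values -/

structure TraceValue where
  label : Label
  spine : List PDLProgram
  focus : PDLProgram
  formula : PDLFormula
  deriving DecidableEq

/-- The labelled formula `x : [α₁]…[αₙ][β*]φ` denoted by a trace value. -/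
def TraceValue.toFormula (τ : TraceValue) : PDLFormula :=
  τ.spine.foldr PDLFormula.box (PDLFormula.box (PDLProgram.star τ.focus) τ.formula)

def TraceValue.toElem (τ : TraceValue) : SeqElem := SeqElem.lab τ.label τ.toFormula

/-- `[γ]τ`: prepend a program to the spine of a trace value. -/
def TraceValue.push (γ : PDLProgram) (τ : TraceValue) : TraceValue :=
  ⟨τ.label, γ :: τ.spine, τ.focus, τ.formula⟩

/-! ### Rule applications of G3PDL -/

inductive RuleApp : Type
  | ax (A : SeqElem)
  | botL (x : Label)
  | wl (A : SeqElem) (Γ Δ : Finset SeqElem)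
  | wr (A : SeqElem) (Γ Δ : Finset SeqElem)
  | andL (x : Label) (φ ψ : PDLFormula) (Γ Δ : Finset SeqElem)
  | andR (x : Label) (φ ψ : PDLFormula) (Γ Δ : Finset SeqElem)
  | orL (x : Label) (φ ψ : PDLFormula) (Γ Δ : Finset SeqElem)
  | orR (x : Label) (φ ψ : PDLFormula) (Γ Δ : Finset SeqElem)
  | impL (x : Label) (φ ψ : PDLFormula) (Γ Δ : Finset SeqElem)
  | impR (x : Label) (φ ψ : PDLFormula) (Γ Δ : Finset SeqElem)
  | boxL (x : Label) (a : ℕ) (y : Label) (φ : PDLFormula) (Γ Δ : Finset SeqElem)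
  | boxR (x : Label) (a : ℕ) (y : Label) (φ : PDLFormula) (Γ Δ : Finset SeqElem)
  | compL (x : Label) (α β : PDLProgram) (φ : PDLFormula) (Γ Δ : Finset SeqElem)
  | compR (x : Label) (α β : PDLProgram) (φ : PDLFormula) (Γ Δ : Finset SeqElem)
  | choiceL (x : Label) (α β : PDLProgram) (φ : PDLFormula) (Γ Δ : Finset SeqElem)
  | choiceR (x : Label) (α β : PDLProgram) (φ : PDLFormula) (Γ Δ : Finset SeqElem)
  | testL (x : Label) (φ ψ : PDLFormula) (Γ Δ : Finset SeqElem)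
  | testR (x : Label) (φ ψ : PDLFormula) (Γ Δ : Finset SeqElem)
  | starL (x : Label) (α : PDLProgram) (φ : PDLFormula) (Γ Δ : Finset SeqElem)
  | starR (x : Label) (α : PDLProgram) (φ : PDLFormula) (Γ Δ : Finset SeqElem)
  | subst (x y : Label) (Γ Δ : Finset SeqElem)
  | cut (A : SeqElem) (Γ Δ Γ₂ Δ₂ : Finset SeqElem)
  deriving DecidableEq

namespace RuleApp

/-- Conclusion of a rule application. -/
def conc : RuleApp → Sequent
  | ax A => ⟨{A}, {A}⟩
  | botL x => ⟨{SeqElem.lab x PDLFormula.bot}, ∅⟩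
  | wl A Γ Δ => ⟨insert A Γ, Δ⟩
  | wr A Γ Δ => ⟨Γ, insert A Δ⟩
  | andL x φ ψ Γ Δ => ⟨insert (SeqElem.lab x (PDLFormula.and φ ψ)) Γ, Δ⟩
  | andR x φ ψ Γ Δ => ⟨Γ, insert (SeqElem.lab x (PDLFormula.and φ ψ)) Δ⟩
  | orL x φ ψ Γ Δ => ⟨insert (SeqElem.lab x (PDLFormula.or φ ψ)) Γ, Δ⟩
  | orR x φ ψ Γ Δ => ⟨Γ, insert (SeqElem.lab x (PDLFormula.or φ ψ)) Δ⟩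
  | impL x φ ψ Γ Δ => ⟨insert (SeqElem.lab x (PDLFormula.imp φ ψ)) Γ, Δ⟩
  | impR x φ ψ Γ Δ => ⟨Γ, insert (SeqElem.lab x (PDLFormula.imp φ ψ)) Δ⟩
  | boxL x a y φ Γ Δ =>
      ⟨insert (SeqElem.lab x (PDLFormula.box (PDLProgram.atom a) φ)) (insert (SeqElem.rel x a y) Γ), Δ⟩
  | boxR x a _ φ Γ Δ => ⟨Γ, insert (SeqElem.lab x (PDLFormula.box (PDLProgram.atom a) φ)) Δ⟩
  | compL x α β φ Γ Δ => ⟨insert (SeqElem.lab x (PDLFormula.box (PDLProgram.comp α β) φ)) Γ, Δ⟩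
  | compR x α β φ Γ Δ => ⟨Γ, insert (SeqElem.lab x (PDLFormula.box (PDLProgram.comp α β) φ)) Δ⟩
  | choiceL x α β φ Γ Δ => ⟨insert (SeqElem.lab x (PDLFormula.box (PDLProgram.choice α β) φ)) Γ, Δ⟩
  | choiceR x α β φ Γ Δ => ⟨Γ, insert (SeqElem.lab x (PDLFormula.box (PDLProgram.choice α β) φ)) Δ⟩
  | testL x φ ψ Γ Δ => ⟨insert (SeqElem.lab x (PDLFormula.box (PDLProgram.test φ) ψ)) Γ, Δ⟩
  | testR x φ ψ Γ Δ => ⟨Γ, insert (SeqElem.lab x (PDLFormula.box (PDLProgram.test φ) ψ)) Δ⟩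
  | starL x α φ Γ Δ => ⟨insert (SeqElem.lab x (PDLFormula.box (PDLProgram.star α) φ)) Γ, Δ⟩
  | starR x α φ Γ Δ => ⟨Γ, insert (SeqElem.lab x (PDLFormula.box (PDLProgram.star α) φ)) Δ⟩
  | subst x y Γ Δ => ⟨Γ.image (SeqElem.subst x y), Δ.image (SeqElem.subst x y)⟩
  | cut _ Γ Δ Γ₂ Δ₂ => ⟨Γ ∪ Γ₂, Δ ∪ Δ₂⟩

/-- Premises of a rule application. -/
def prems : RuleApp → List Sequent
  | ax _ => []
  | botL _ => []
  | wl _ Γ Δ => [⟨Γ, Δ⟩]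
  | wr _ Γ Δ => [⟨Γ, Δ⟩]
  | andL x φ ψ Γ Δ => [⟨insert (SeqElem.lab x φ) (insert (SeqElem.lab x ψ) Γ), Δ⟩]
  | andR x φ ψ Γ Δ => [⟨Γ, insert (SeqElem.lab x φ) Δ⟩, ⟨Γ, insert (SeqElem.lab x ψ) Δ⟩]
  | orL x φ ψ Γ Δ => [⟨insert (SeqElem.lab x φ) Γ, Δ⟩, ⟨insert (SeqElem.lab x ψ) Γ, Δ⟩]
  | orR x φ ψ Γ Δ => [⟨Γ, insert (SeqElem.lab x φ) (insert (SeqElem.lab x ψ) Δ)⟩]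
  | impL x φ ψ Γ Δ => [⟨Γ, insert (SeqElem.lab x φ) Δ⟩, ⟨insert (SeqElem.lab x ψ) Γ, Δ⟩]
  | impR x φ ψ Γ Δ => [⟨insert (SeqElem.lab x φ) Γ, insert (SeqElem.lab x ψ) Δ⟩]
  | boxL _ _ y φ Γ Δ => [⟨insert (SeqElem.lab y φ) Γ, Δ⟩]
  | boxR x a y φ Γ Δ => [⟨insert (SeqElem.rel x a y) Γ, insert (SeqElem.lab y φ) Δ⟩]
  | compL x α β φ Γ Δ => [⟨insert (SeqElem.lab x (PDLFormula.box α (PDLFormula.box β φ))) Γ, Δ⟩]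
  | compR x α β φ Γ Δ => [⟨Γ, insert (SeqElem.lab x (PDLFormula.box α (PDLFormula.box β φ))) Δ⟩]
  | choiceL x α β φ Γ Δ =>
      [⟨insert (SeqElem.lab x (PDLFormula.box α φ)) (insert (SeqElem.lab x (PDLFormula.box β φ)) Γ), Δ⟩]
  | choiceR x α β φ Γ Δ =>
      [⟨Γ, insert (SeqElem.lab x (PDLFormula.box α φ)) Δ⟩, ⟨Γ, insert (SeqElem.lab x (PDLFormula.box β φ)) Δ⟩]
  | testL x φ ψ Γ Δ => [⟨Γ, insert (SeqElem.lab x φ) Δ⟩, ⟨insert (SeqElem.lab x ψ) Γ, Δ⟩]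
  | testR x φ ψ Γ Δ => [⟨insert (SeqElem.lab x φ) Γ, insert (SeqElem.lab x ψ) Δ⟩]
  | starL x α φ Γ Δ =>
      [⟨insert (SeqElem.lab x φ)
          (insert (SeqElem.lab x (PDLFormula.box α (PDLFormula.box (PDLProgram.star α) φ))) Γ), Δ⟩]
  | starR x α φ Γ Δ =>
      [⟨Γ, insert (SeqElem.lab x φ) Δ⟩,
       ⟨Γ, insert (SeqElem.lab x (PDLFormula.box α (PDLFormula.box (PDLProgram.star α) φ))) Δ⟩]
  | subst _ _ Γ Δ => [⟨Γ, Δ⟩]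
  | cut A Γ Δ Γ₂ Δ₂ => [⟨Γ, insert A Δ⟩, ⟨insert A Γ₂, Δ₂⟩]

/-- Side conditions: the fresh-label condition of (□R). -/
def wf : RuleApp → Prop
  | boxR x _ y _ Γ Δ => y ∉ labs Γ ∧ y ∉ labs Δ ∧ y ≠ x
  | _ => True

/-- `(τ, τ')` is a trace pair for (conclusion, `i`-th premise) of the rule application. -/
def tracePair : RuleApp → ℕ → TraceValue → TraceValue → Prop
  | ax _, _, _, _ => False
  | botL _, _, _, _ => False
  | wl _ _ Δ, i, τ, τ' => i = 0 ∧ τ.toElem ∈ Δ ∧ τ' = τ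
  | wr _ _ Δ, i, τ, τ' => i = 0 ∧ τ.toElem ∈ Δ ∧ τ' = τ
  | andL _ _ _ _ Δ, i, τ, τ' => i = 0 ∧ τ.toElem ∈ Δ ∧ τ' = τ
  | andR _ _ _ _ Δ, i, τ, τ' => i < 2 ∧ τ.toElem ∈ Δ ∧ τ' = τ
  | orL _ _ _ _ Δ, i, τ, τ' => i < 2 ∧ τ.toElem ∈ Δ ∧ τ' = τ
  | orR _ _ _ _ Δ, i, τ, τ' => i = 0 ∧ τ.toElem ∈ Δ ∧ τ' = τ
  | impL _ _ _ _ Δ, i, τ, τ' => i < 2 ∧ τ.toElem ∈ Δ ∧ τ' = τ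
  | impR _ _ _ _ Δ, i, τ, τ' => i = 0 ∧ τ.toElem ∈ Δ ∧ τ' = τ
  | boxL _ _ _ _ _ Δ, i, τ, τ' => i = 0 ∧ τ.toElem ∈ Δ ∧ τ' = τ
  | boxR x a y φ _ Δ, i, τ, τ' => i = 0 ∧
      ((τ.toElem ∈ Δ ∧ τ' = τ) ∨
       (τ'.toElem = SeqElem.lab y φ ∧
        τ = ⟨x, PDLProgram.atom a :: τ'.spine, τ'.focus, τ'.formula⟩))
  | compL _ _ _ _ _ Δ, i, τ, τ' => i = 0 ∧ τ.toElem ∈ Δ ∧ τ' = τ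
  | compR x α β φ _ Δ, i, τ, τ' => i = 0 ∧
      ((τ.toElem ∈ Δ ∧ τ' = τ) ∨
       (∃ σ : TraceValue, σ.toElem = SeqElem.lab x φ ∧
          τ = σ.push (PDLProgram.comp α β) ∧ τ' = (σ.push β).push α))
  | choiceL _ _ _ _ _ Δ, i, τ, τ' => i = 0 ∧ τ.toElem ∈ Δ ∧ τ' = τ
  | choiceR x α β φ _ Δ, i, τ, τ' => i < 2 ∧
      ((τ.toElem ∈ Δ ∧ τ' = τ) ∨
       (∃ σ : TraceValue, σ.toElem = SeqElem.lab x φ ∧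
          τ = σ.push (PDLProgram.choice α β) ∧ τ' = σ.push (if i = 0 then α else β)))
  | testL _ _ _ _ Δ, i, τ, τ' => i < 2 ∧ τ.toElem ∈ Δ ∧ τ' = τ
  | testR x φ ψ _ Δ, i, τ, τ' => i = 0 ∧
      ((τ.toElem ∈ Δ ∧ τ' = τ) ∨
       (τ'.toElem = SeqElem.lab x ψ ∧ τ = τ'.push (PDLProgram.test φ)))
  | starL _ _ _ _ Δ, i, τ, τ' => i = 0 ∧ τ.toElem ∈ Δ ∧ τ' = τ
  | starR x α φ _ Δ, i, τ, τ' =>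
      (i = 0 ∧ ((τ.toElem ∈ Δ ∧ τ' = τ) ∨
         (τ'.toElem = SeqElem.lab x φ ∧ τ = τ'.push (PDLProgram.star α)))) ∨
      (i = 1 ∧ ((τ.toElem ∈ Δ ∧ τ' = τ) ∨
         (τ.toElem = SeqElem.lab x (PDLFormula.box (PDLProgram.star α) φ) ∧ τ' = τ.push α)))
  | subst x y _ Δ, i, τ, τ' => i = 0 ∧ τ'.toElem ∈ Δ ∧
      τ = ⟨substLabel x y τ'.label, τ'.spine, τ'.focus, τ'.formula⟩
  | cut _ _ Δ _ Δ₂, i, τ, τ' =>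
      (i = 0 ∧ τ.toElem ∈ Δ ∧ τ' = τ) ∨ (i = 1 ∧ τ.toElem ∈ Δ₂ ∧ τ' = τ)

/-- Progressing trace pairs: the principal formula of a (∗R) right premise with empty spine. -/
def progressing : RuleApp → ℕ → TraceValue → TraceValue → Prop
  | starR x α φ _ _, i, τ, τ' => i = 1 ∧ τ = ⟨x, [], α, φ⟩ ∧ τ' = τ.push α
  | _, _, _, _ => False

/-! #### Classification of rule applications -/

def isCut : RuleApp → Prop | cut _ _ _ _ _ => True | _ => False
def isSubst : RuleApp → Prop | subst _ _ _ _ => True | _ => False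
def isWeak : RuleApp → Prop | wl _ _ _ => True | wr _ _ _ => True | _ => False

/-- Rules allowed when closing a leaf: weakenings, (Ax) and (⊥). -/
def isClosing : RuleApp → Prop
  | wl _ _ _ => True | wr _ _ _ => True | ax _ => True | botL _ => True | _ => False

/-- The logical rules: all rules except weakening, (Subst) and (Cut). -/
def isLogical : RuleApp → Prop
  | wl _ _ _ => False | wr _ _ _ => False | subst _ _ _ _ => False | cut _ _ _ _ _ => False
  | _ => True

/-- The left logical rules. -/
def isLeftLogical : RuleApp → Prop
  | andL _ _ _ _ _ => True | orL _ _ _ _ _ => True | impL _ _ _ _ _ => True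
  | boxL _ _ _ _ _ _ => True | compL _ _ _ _ _ _ => True | choiceL _ _ _ _ _ _ => True
  | testL _ _ _ _ _ => True | starL _ _ _ _ _ => True
  | _ => False

/-- The rule instance consumes its principal labelled formula (it does not also occur in the
context), and (for □L) preserves the relational atom. -/
def consumes : RuleApp → Prop
  | andL x φ ψ Γ _ => SeqElem.lab x (PDLFormula.and φ ψ) ∉ Γ
  | andR x φ ψ _ Δ => SeqElem.lab x (PDLFormula.and φ ψ) ∉ Δ
  | orL x φ ψ Γ _ => SeqElem.lab x (PDLFormula.or φ ψ) ∉ Γ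
  | orR x φ ψ _ Δ => SeqElem.lab x (PDLFormula.or φ ψ) ∉ Δ
  | impL x φ ψ Γ _ => SeqElem.lab x (PDLFormula.imp φ ψ) ∉ Γ
  | impR x φ ψ _ Δ => SeqElem.lab x (PDLFormula.imp φ ψ) ∉ Δ
  | boxL x a y φ Γ _ =>
      SeqElem.lab x (PDLFormula.box (PDLProgram.atom a) φ) ∉ Γ ∧ SeqElem.rel x a y ∈ Γ
  | boxR x a _ φ _ Δ => SeqElem.lab x (PDLFormula.box (PDLProgram.atom a) φ) ∉ Δ
  | compL x α β φ Γ _ => SeqElem.lab x (PDLFormula.box (PDLProgram.comp α β) φ) ∉ Γ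
  | compR x α β φ _ Δ => SeqElem.lab x (PDLFormula.box (PDLProgram.comp α β) φ) ∉ Δ
  | choiceL x α β φ Γ _ => SeqElem.lab x (PDLFormula.box (PDLProgram.choice α β) φ) ∉ Γ
  | choiceR x α β φ _ Δ => SeqElem.lab x (PDLFormula.box (PDLProgram.choice α β) φ) ∉ Δ
  | testL x φ ψ Γ _ => SeqElem.lab x (PDLFormula.box (PDLProgram.test φ) ψ) ∉ Γ
  | testR x φ ψ _ Δ => SeqElem.lab x (PDLFormula.box (PDLProgram.test φ) ψ) ∉ Δ
  | starL x α φ Γ _ => SeqElem.lab x (PDLFormula.box (PDLProgram.star α) φ) ∉ Γ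
  | starR x α φ _ Δ => SeqElem.lab x (PDLFormula.box (PDLProgram.star α) φ) ∉ Δ
  | _ => True

/-- `B` (in the antecedent of the `i`-th premise) is an immediate ancestor of `A`
(in the antecedent of the conclusion). -/
def antAncestor : RuleApp → ℕ → SeqElem → SeqElem → Prop
  | ax _, _, _, _ => False
  | botL _, _, _, _ => False
  | wl _ Γ _, i, A, B => i = 0 ∧ A ∈ Γ ∧ B = A
  | wr _ Γ _, i, A, B => i = 0 ∧ A ∈ Γ ∧ B = A
  | andL x φ ψ Γ _, i, A, B => i = 0 ∧
      ((A ∈ Γ ∧ B = A) ∨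
       (A = SeqElem.lab x (PDLFormula.and φ ψ) ∧ (B = SeqElem.lab x φ ∨ B = SeqElem.lab x ψ)))
  | andR _ _ _ Γ _, i, A, B => i < 2 ∧ A ∈ Γ ∧ B = A
  | orL x φ ψ Γ _, i, A, B => i < 2 ∧
      ((A ∈ Γ ∧ B = A) ∨
       (A = SeqElem.lab x (PDLFormula.or φ ψ) ∧ B = SeqElem.lab x (if i = 0 then φ else ψ)))
  | orR _ _ _ Γ _, i, A, B => i = 0 ∧ A ∈ Γ ∧ B = A
  | impL x φ ψ Γ _, i, A, B =>
      (i = 0 ∧ A ∈ Γ ∧ B = A) ∨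
      (i = 1 ∧ ((A ∈ Γ ∧ B = A) ∨
        (A = SeqElem.lab x (PDLFormula.imp φ ψ) ∧ B = SeqElem.lab x ψ)))
  | impR _ _ _ Γ _, i, A, B => i = 0 ∧ A ∈ Γ ∧ B = A
  | boxL x a y φ Γ _, i, A, B => i = 0 ∧
      ((A ∈ Γ ∧ B = A) ∨
       (A = SeqElem.lab x (PDLFormula.box (PDLProgram.atom a) φ) ∧ B = SeqElem.lab y φ))
  | boxR _ _ _ _ Γ _, i, A, B => i = 0 ∧ A ∈ Γ ∧ B = A
  | compL x α β φ Γ _, i, A, B => i = 0 ∧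
      ((A ∈ Γ ∧ B = A) ∨
       (A = SeqElem.lab x (PDLFormula.box (PDLProgram.comp α β) φ) ∧
        B = SeqElem.lab x (PDLFormula.box α (PDLFormula.box β φ))))
  | compR _ _ _ _ Γ _, i, A, B => i = 0 ∧ A ∈ Γ ∧ B = A
  | choiceL x α β φ Γ _, i, A, B => i = 0 ∧
      ((A ∈ Γ ∧ B = A) ∨
       (A = SeqElem.lab x (PDLFormula.box (PDLProgram.choice α β) φ) ∧
        (B = SeqElem.lab x (PDLFormula.box α φ) ∨ B = SeqElem.lab x (PDLFormula.box β φ))))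
  | choiceR _ _ _ _ Γ _, i, A, B => i < 2 ∧ A ∈ Γ ∧ B = A
  | testL x φ ψ Γ _, i, A, B =>
      (i = 0 ∧ A ∈ Γ ∧ B = A) ∨
      (i = 1 ∧ ((A ∈ Γ ∧ B = A) ∨
        (A = SeqElem.lab x (PDLFormula.box (PDLProgram.test φ) ψ) ∧ B = SeqElem.lab x ψ)))
  | testR _ _ _ Γ _, i, A, B => i = 0 ∧ A ∈ Γ ∧ B = A
  | starL x α φ Γ _, i, A, B => i = 0 ∧
      ((A ∈ Γ ∧ B = A) ∨
       (A = SeqElem.lab x (PDLFormula.box (PDLProgram.star α) φ) ∧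
        (B = SeqElem.lab x φ ∨
         B = SeqElem.lab x (PDLFormula.box α (PDLFormula.box (PDLProgram.star α) φ)))))
  | starR _ _ _ Γ _, i, A, B => i < 2 ∧ A ∈ Γ ∧ B = A
  | subst x y Γ _, i, A, B => i = 0 ∧ B ∈ Γ ∧ A = B.subst x y
  | cut _ Γ _ Γ₂ _, i, A, B =>
      (i = 0 ∧ A ∈ Γ ∧ B = A) ∨ (i = 1 ∧ A ∈ Γ₂ ∧ B = A)

/-- `B` (in the consequent of the `i`-th premise) is an immediate ancestor of `A`
(in the consequent of the conclusion). -/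
def sucAncestor : RuleApp → ℕ → SeqElem → SeqElem → Prop
  | ax _, _, _, _ => False
  | botL _, _, _, _ => False
  | wl _ _ Δ, i, A, B => i = 0 ∧ A ∈ Δ ∧ B = A
  | wr _ _ Δ, i, A, B => i = 0 ∧ A ∈ Δ ∧ B = A
  | andL _ _ _ _ Δ, i, A, B => i = 0 ∧ A ∈ Δ ∧ B = A
  | andR x φ ψ _ Δ, i, A, B => i < 2 ∧
      ((A ∈ Δ ∧ B = A) ∨
       (A = SeqElem.lab x (PDLFormula.and φ ψ) ∧ B = SeqElem.lab x (if i = 0 then φ else ψ)))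
  | orL _ _ _ _ Δ, i, A, B => i < 2 ∧ A ∈ Δ ∧ B = A
  | orR x φ ψ _ Δ, i, A, B => i = 0 ∧
      ((A ∈ Δ ∧ B = A) ∨
       (A = SeqElem.lab x (PDLFormula.or φ ψ) ∧ (B = SeqElem.lab x φ ∨ B = SeqElem.lab x ψ)))
  | impL _ _ _ _ Δ, i, A, B => i < 2 ∧ A ∈ Δ ∧ B = A
  | impR x φ ψ _ Δ, i, A, B => i = 0 ∧
      ((A ∈ Δ ∧ B = A) ∨ (A = SeqElem.lab x (PDLFormula.imp φ ψ) ∧ B = SeqElem.lab x ψ))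
  | boxL _ _ _ _ _ Δ, i, A, B => i = 0 ∧ A ∈ Δ ∧ B = A
  | boxR x a y φ _ Δ, i, A, B => i = 0 ∧
      ((A ∈ Δ ∧ B = A) ∨
       (A = SeqElem.lab x (PDLFormula.box (PDLProgram.atom a) φ) ∧ B = SeqElem.lab y φ))
  | compL _ _ _ _ _ Δ, i, A, B => i = 0 ∧ A ∈ Δ ∧ B = A
  | compR x α β φ _ Δ, i, A, B => i = 0 ∧
      ((A ∈ Δ ∧ B = A) ∨
       (A = SeqElem.lab x (PDLFormula.box (PDLProgram.comp α β) φ) ∧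
        B = SeqElem.lab x (PDLFormula.box α (PDLFormula.box β φ))))
  | choiceL _ _ _ _ _ Δ, i, A, B => i = 0 ∧ A ∈ Δ ∧ B = A
  | choiceR x α β φ _ Δ, i, A, B => i < 2 ∧
      ((A ∈ Δ ∧ B = A) ∨
       (A = SeqElem.lab x (PDLFormula.box (PDLProgram.choice α β) φ) ∧
        B = SeqElem.lab x (PDLFormula.box (if i = 0 then α else β) φ)))
  | testL _ _ _ _ Δ, i, A, B => i < 2 ∧ A ∈ Δ ∧ B = A
  | testR x φ ψ _ Δ, i, A, B => i = 0 ∧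
      ((A ∈ Δ ∧ B = A) ∨
       (A = SeqElem.lab x (PDLFormula.box (PDLProgram.test φ) ψ) ∧ B = SeqElem.lab x ψ))
  | starL _ _ _ _ Δ, i, A, B => i = 0 ∧ A ∈ Δ ∧ B = A
  | starR x α φ _ Δ, i, A, B => i < 2 ∧
      ((A ∈ Δ ∧ B = A) ∨
       (A = SeqElem.lab x (PDLFormula.box (PDLProgram.star α) φ) ∧
        B = SeqElem.lab x (if i = 0 then φ
              else PDLFormula.box α (PDLFormula.box (PDLProgram.star α) φ))))
  | subst x y _ Δ, i, A, B => i = 0 ∧ B ∈ Δ ∧ A = B.subst x y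
  | cut _ _ Δ _ Δ₂, i, A, B =>
      (i = 0 ∧ A ∈ Δ ∧ B = A) ∨ (i = 1 ∧ A ∈ Δ₂ ∧ B = A)

end RuleApp
/-! ### Derivations: possibly infinite trees of rule applications, with open leaves -/

/-- A node of a derivation: either a rule application, or an open leaf with its sequent. -/
abbrev DNode := Sum RuleApp Sequent

def DNode.concl : DNode → Sequent := Sum.elim RuleApp.conc id

/-- A (possibly infinite, possibly open) derivation, presented as an assignment of nodes to
the addresses (lists of child indices) of an infinitely-branching tree. -/
structure Deriv where
  node : List ℕ → Option DNode
  wf_rule : ∀ p r, node p = some (Sum.inl r) → r.wf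
  children : ∀ p r, node p = some (Sum.inl r) →
      ∀ i, (node (p ++ [i])).map DNode.concl = r.prems[i]?
  leaf_no_children : ∀ p S, node p = some (Sum.inr S) → ∀ i, node (p ++ [i]) = none
  tree_closed : ∀ p i, node p = none → node (p ++ [i]) = none

namespace Deriv

def ruleAt (D : Deriv) (p : List ℕ) : Option RuleApp :=
  match D.node p with
  | some (Sum.inl r) => some r
  | _ => none

def openAt (D : Deriv) (p : List ℕ) : Option Sequent :=
  match D.node p with
  | some (Sum.inr S) => some S
  | _ => none

def seqAt (D : Deriv) (p : List ℕ) : Option Sequent := (D.node p).map DNode.concl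

def Finite (D : Deriv) : Prop := { p | (D.node p).isSome }.Finite

def NoOpen (D : Deriv) : Prop := ∀ p S, D.node p ≠ some (Sum.inr S)

end Deriv

/-! ### Infinite paths, traces and the global trace condition -/

/-- The address of the `n`-th node on the infinite branch determined by the sequence `f` of
child indices. -/
def pathAddr (f : ℕ → ℕ) (n : ℕ) : List ℕ := (List.range n).map f

/-- `f` determines an infinite path in the derivation tree whose rules are given by `R`. -/
def IsInfPath (R : List ℕ → Option RuleApp) (f : ℕ → ℕ) : Prop :=
  ∀ n, (R (pathAddr f n)).isSome

/-- The infinite path determined by `f` is followed (from some point `N` on) by an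
infinitely progressing trace. -/
def FollowedByProgTrace (R : List ℕ → Option RuleApp) (f : ℕ → ℕ) : Prop :=
  ∃ (N : ℕ) (g : ℕ → TraceValue),
    (∀ k, ∃ r, R (pathAddr f (N + k)) = some r ∧
        RuleApp.tracePair r (f (N + k)) (g k) (g (k + 1))) ∧
    (∀ m, ∃ k, m ≤ k ∧ ∃ r, R (pathAddr f (N + k)) = some r ∧
        RuleApp.progressing r (f (N + k)) (g k) (g (k + 1)))

/-- The global trace condition. -/
def GTC (R : List ℕ → Option RuleApp) : Prop :=
  ∀ f, IsInfPath R f → FollowedByProgTrace R f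

/-- A `G3PDL∞` proof of `S`: a pre-proof (derivation without open leaves) whose root sequent is
`S` and which satisfies the global trace condition. -/
def Deriv.IsProofOf (D : Deriv) (S : Sequent) : Prop :=
  D.seqAt [] = some S ∧ D.NoOpen ∧ GTC D.ruleAt

/-! ### Finite traces along finite paths in a derivation -/

/-- `tr` is a trace covering the path from the node at address `base` to the node at address
`base ++ tail`. -/
def CoversFrom (D : Deriv) (base tail : List ℕ) (tr : List TraceValue) : Prop :=
  tr.length = tail.length + 1 ∧
  ∀ i r j τ τ', D.ruleAt (base ++ tail.take i) = some r → tail[i]? = some j →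
    tr[i]? = some τ → tr[i + 1]? = some τ' → RuleApp.tracePair r j τ τ'

/-- The trace `tr` covering the path from `base` along `tail` progresses at position `i`. -/
def ProgAtFrom (D : Deriv) (base tail : List ℕ) (tr : List TraceValue) (i : ℕ) : Prop :=
  ∃ r j τ τ', D.ruleAt (base ++ tail.take i) = some r ∧ tail[i]? = some j ∧
    tr[i]? = some τ ∧ tr[i + 1]? = some τ' ∧ RuleApp.progressing r j τ τ'

/-! ### Cyclic derivations and their unfoldings -/

/-- Dereference an address: at an ordinary node stay put, at a bud jump to its companion. -/
def Deriv.deref (D : Deriv) (c : List ℕ → Option (List ℕ)) (p : List ℕ) : Option (List ℕ) :=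
  match D.node p with
  | some (Sum.inl _) => some p
  | some (Sum.inr _) => c p
  | none => none

/-- The address (in the finite tree) of the node corresponding to the address `p` of the
infinite unfolding. -/
def Deriv.unfoldAddr (D : Deriv) (c : List ℕ → Option (List ℕ)) (p : List ℕ) :
    Option (List ℕ) :=
  p.foldl (fun q i => q.bind fun q' => D.deref c (q' ++ [i])) (D.deref c [])

/-- The rule applied at address `p` of the infinite unfolding of the cyclic derivation. -/
def Deriv.unfoldRule (D : Deriv) (c : List ℕ → Option (List ℕ)) (p : List ℕ) :
    Option RuleApp :=
  (D.unfoldAddr c p).bind fun q => D.ruleAt q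

/-- Each bud assigned a companion must be assigned an internal node carrying a syntactically
identical sequent. -/
def CompanionCond (D : Deriv) (c : List ℕ → Option (List ℕ)) : Prop :=
  ∀ p S, D.node p = some (Sum.inr S) →
    ∀ q, c p = some q → ∃ r, D.node q = some (Sum.inl r) ∧ RuleApp.conc r = S

/-- Every bud is assigned a companion. -/
def FullCompanion (D : Deriv) (c : List ℕ → Option (List ℕ)) : Prop :=
  ∀ p S, D.node p = some (Sum.inr S) → ∃ q, c p = some q

/-- `S` is derivable in the cyclic system `G3PDLω`: there is a finite derivation tree, with each
bud assigned a companion, whose infinite unfolding satisfies the global trace condition. -/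
def CyclicDerivable (S : Sequent) : Prop :=
  ∃ (D : Deriv) (c : List ℕ → Option (List ℕ)),
    D.seqAt [] = some S ∧ D.Finite ∧ CompanionCond D c ∧ FullCompanion D c ∧
    GTC (D.unfoldRule c)

/-! ### Unwindings and capped unwindings -/

/-- A sequent that can be closed by weakenings leading to (⊥) or an axiom. -/
def closable (S : Sequent) : Prop :=
  (∃ x, SeqElem.lab x PDLFormula.bot ∈ S.ant) ∨ ∃ A, A ∈ S.ant ∧ A ∈ S.suc

/-- The subtree rooted at `p` is a finite closed derivation using only weakening rules,
(Ax) and (⊥). -/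
def ClosingSubtreeAt (D : Deriv) (p : List ℕ) : Prop :=
  (∀ q r, D.ruleAt (p ++ q) = some r → RuleApp.isClosing r) ∧
  (∀ q, D.openAt (p ++ q) = none) ∧
  { q | (D.node (p ++ q)).isSome }.Finite

/-- One application of the validity-preserving weakenings of Lemma (Valid Weakenings):
(1) remove a consequent relational atom not occurring in the antecedent;
(2) remove a consequent labelled atomic proposition `x : p` from a normal sequent with
    `x ∉ starred Δ`;
(3) remove an antecedent labelled formula `x : φ` from a normal sequent with `x ∉ labs Δ`;
(4) remove an antecedent relational atom `x →a y` from a normal sequent in which all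
    antecedent labelled formulas have their label in `labs Δ`, `x ∉ labs Δ` and `x` is not
    reachable in `Γ` from any label of `Δ`. -/
inductive VPW : Sequent → Sequent → Prop
  | relRight (Γ Δ : Finset SeqElem) (x z : Label) (a : ℕ) :
      SeqElem.rel x a z ∉ Γ → SeqElem.rel x a z ∉ Δ →
      VPW ⟨Γ, insert (SeqElem.rel x a z) Δ⟩ ⟨Γ, Δ⟩
  | atomRight (Γ Δ : Finset SeqElem) (x : Label) (p : ℕ) :
      NormalSeq ⟨Γ, insert (SeqElem.lab x (PDLFormula.atom p)) Δ⟩ →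
      SeqElem.lab x (PDLFormula.atom p) ∉ Δ → x ∉ starred Δ →
      VPW ⟨Γ, insert (SeqElem.lab x (PDLFormula.atom p)) Δ⟩ ⟨Γ, Δ⟩
  | labLeft (Γ Δ : Finset SeqElem) (x : Label) (φ : PDLFormula) :
      NormalSeq ⟨insert (SeqElem.lab x φ) Γ, Δ⟩ →
      SeqElem.lab x φ ∉ Γ → x ∉ labs Δ →
      VPW ⟨insert (SeqElem.lab x φ) Γ, Δ⟩ ⟨Γ, Δ⟩
  | relLeft (Γ Δ : Finset SeqElem) (x y : Label) (a : ℕ) :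
      NormalSeq ⟨insert (SeqElem.rel x a y) Γ, Δ⟩ →
      SeqElem.rel x a y ∉ Γ →
      (∀ z φ, SeqElem.lab z φ ∈ Γ → z ∈ labs Δ) → x ∉ labs Δ →
      (∀ z ∈ labs Δ, ¬ reaches Γ z x) →
      VPW ⟨insert (SeqElem.rel x a y) Γ, Δ⟩ ⟨Γ, Δ⟩

/-- The subtree rooted at `p` is a chain of validity-preserving weakenings, exhaustively
applied, ending at an open leaf to which no further such weakening applies. -/
def WeakCapAt (D : Deriv) (p : List ℕ) (S : Sequent) : Prop :=
  D.seqAt p = some S ∧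
  ∃ n : ℕ,
    (∀ k, k < n → ∃ r S₂, D.node (p ++ List.replicate k 0) = some (Sum.inl r) ∧
        RuleApp.isWeak r ∧ RuleApp.prems r = [S₂] ∧ VPW (RuleApp.conc r) S₂) ∧
    (∃ S', D.node (p ++ List.replicate n 0) = some (Sum.inr S') ∧ ∀ T, ¬ VPW S' T) ∧
    (∀ q, (D.node (p ++ q)).isSome → ∃ k, k ≤ n ∧ q = List.replicate k 0)

/-- In the derivation `D`, no trace covering a (sub-)path progresses more than once. -/
def OnceProgress (D : Deriv) : Prop :=
  ∀ base tail tr, CoversFrom D base tail tr →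
    ∀ i j, ProgAtFrom D base tail tr i → ProgAtFrom D base tail tr j → i = j

/-- Extending the derivation `D` at the node `base ++ tail` with the rule instance `r`
(towards its `k`-th premise) would create a trace progressing more than once. -/
def ExtTraceTwice (D : Deriv) (base tail : List ℕ) (r : RuleApp) (k : ℕ) : Prop :=
  ∃ (tr : List TraceValue) (τ τ' : TraceValue),
    CoversFrom D base tail tr ∧ tr.getLast? = some τ ∧ RuleApp.tracePair r k τ τ' ∧
    ((∃ i j, i ≠ j ∧ ProgAtFrom D base tail tr i ∧ ProgAtFrom D base tail tr j) ∨
     (RuleApp.progressing r k τ τ' ∧ ∃ i, ProgAtFrom D base tail tr i))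

/-- An unwinding of `S`: a possibly open derivation of `S` obtained by applying left and right
logical rules as much as possible, in which no trace progresses more than once, and all rule
instances consume the active labelled formula of their conclusion but preserve relational
atoms. -/
def IsUnwinding (S : Sequent) (U : Deriv) : Prop :=
  U.seqAt [] = some S ∧
  (∀ p r, U.ruleAt p = some r → RuleApp.isLogical r ∧ RuleApp.consumes r) ∧
  OnceProgress U ∧
  ∀ p S', U.openAt p = some S' →
    ∀ r : RuleApp, RuleApp.isLogical r → RuleApp.consumes r → RuleApp.wf r →
      RuleApp.conc r = S' → RuleApp.prems r ≠ [] →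
      ∃ base tail k, base ++ tail = p ∧ k < (RuleApp.prems r).length ∧
        ExtTraceTwice U base tail r k

/-- A capped unwinding for `S`: an unwinding of `S` in which (a) all open leaves containing
`x : ⊥` on the left or a common formula on both sides have been closed by weakenings leading to
(Ax) or (⊥), and (b) the validity-preserving weakenings have been exhaustively applied to all
other open leaves. -/
def IsCappedUnwinding (S : Sequent) (C : Deriv) : Prop :=
  ∃ U : Deriv, IsUnwinding S U ∧
    (∀ p r, U.node p = some (Sum.inl r) → C.node p = some (Sum.inl r)) ∧
    (∀ p S', U.node p = some (Sum.inr S') →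
      (closable S' → C.seqAt p = some S' ∧ ClosingSubtreeAt C p) ∧
      (¬ closable S' → WeakCapAt C p S')) ∧
    (∀ p, U.node p = none →
      (∀ p₁ S', p₁ <+: p → U.node p₁ ≠ some (Sum.inr S')) → C.node p = none)

/-! An open leaf of an unwinding admits no further logical rule except one that would make some
trace progress a second time, and only (∗R) makes traces progress. So on the right only atomic and
iterated formulas survive, and on the left only atomic formulas and boxes `[a]φ` without an
`a`-successor. Capping a leaf that is not closable only deletes formulas, which keeps these
properties as well as the disjointness of the two sides, and exhaustive weakening deletes every
relational atom on the right. -/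

namespace RuleApp

/-- `r` is a rule instance that an unwinding of `S` could still apply at a leaf labelled `S`
without making any trace progress. -/
def ExpandsWithoutProgress (S : Sequent) (r : RuleApp) : Prop :=
  r.isLogical ∧ r.consumes ∧ r.wf ∧ r.conc = S ∧ r.prems ≠ [] ∧
    ∀ k τ τ', ¬ r.progressing k τ τ'

/-- The right rule with principal formula `x : φ`; `y` is the eigenlabel of (□R). -/
def rightIntro (x y : Label) (Γ Δ : Finset SeqElem) : PDLFormula → Option RuleApp
  | .and φ ψ => some (andR x φ ψ Γ Δ)
  | .or φ ψ => some (orR x φ ψ Γ Δ)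
  | .imp φ ψ => some (impR x φ ψ Γ Δ)
  | .box (.atom a) φ => some (boxR x a y φ Γ Δ)
  | .box (.comp α β) φ => some (compR x α β φ Γ Δ)
  | .box (.choice α β) φ => some (choiceR x α β φ Γ Δ)
  | .box (.test φ) ψ => some (testR x φ ψ Γ Δ)
  | _ => none

/-- The left rule with principal formula `x : φ`; `y` is the successor used by (□L). -/
def leftIntro (x y : Label) (Γ Δ : Finset SeqElem) : PDLFormula → Option RuleApp
  | .and φ ψ => some (andL x φ ψ Γ Δ)
  | .or φ ψ => some (orL x φ ψ Γ Δ)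
  | .imp φ ψ => some (impL x φ ψ Γ Δ)
  | .box (.atom a) φ => some (boxL x a y φ Γ Δ)
  | .box (.comp α β) φ => some (compL x α β φ Γ Δ)
  | .box (.choice α β) φ => some (choiceL x α β φ Γ Δ)
  | .box (.test φ) ψ => some (testL x φ ψ Γ Δ)
  | .box (.star α) φ => some (starL x α φ Γ Δ)
  | _ => none

theorem rightIntro_isSome {φ : PDLFormula} (hat : ¬ φ.isAtomic) (hit : ¬ φ.isIterated)
    (x y : Label) (Γ Δ : Finset SeqElem) : (rightIntro x y Γ Δ φ).isSome := by
  rcases φ with _ | _ | _ | _ | _ | ⟨_ | _ | _ | _ | _, _⟩ <;>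
    simp_all [rightIntro, PDLFormula.isAtomic, PDLFormula.isIterated]

theorem leftIntro_isSome {φ : PDLFormula} (hat : ¬ φ.isAtomic)
    (x y : Label) (Γ Δ : Finset SeqElem) : (leftIntro x y Γ Δ φ).isSome := by
  rcases φ with _ | _ | _ | _ | _ | ⟨_ | _ | _ | _ | _, _⟩ <;>
    simp_all [leftIntro, PDLFormula.isAtomic]

theorem expandsWithoutProgress_of_mem_rightIntro {S : Sequent} {x y : Label} {φ : PDLFormula}
    {r : RuleApp} (hx : SeqElem.lab x φ ∈ S.suc)
    (hy : y ∉ labs S.ant ∧ y ∉ labs (S.suc.erase (SeqElem.lab x φ)) ∧ y ≠ x)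
    (hr : r ∈ rightIntro x y S.ant (S.suc.erase (SeqElem.lab x φ)) φ) :
    r.ExpandsWithoutProgress S := by
  have hS : S = ⟨S.ant, insert (SeqElem.lab x φ) (S.suc.erase (SeqElem.lab x φ))⟩ := by
    rw [Finset.insert_erase hx]
  rcases φ with _ | _ | _ | _ | _ | ⟨_ | _ | _ | _ | _, _⟩ <;>
    simp only [rightIntro, Option.mem_def, Option.some.injEq, reduceCtorEq] at hr <;> subst hr <;>
    exact ⟨trivial, Finset.notMem_erase _ _, by trivial, hS.symm,
      by simp [prems], by simp [progressing]⟩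

theorem expandsWithoutProgress_of_mem_leftIntro {S : Sequent} {x y : Label} {φ : PDLFormula}
    {r : RuleApp} (hx : SeqElem.lab x φ ∈ S.ant)
    (hy : ∀ a ψ, φ = .box (.atom a) ψ → SeqElem.rel x a y ∈ S.ant)
    (hr : r ∈ leftIntro x y (S.ant.erase (SeqElem.lab x φ)) S.suc φ) :
    r.ExpandsWithoutProgress S := by
  have hS : S = ⟨insert (SeqElem.lab x φ) (S.ant.erase (SeqElem.lab x φ)), S.suc⟩ := by
    rw [Finset.insert_erase hx]
  rcases φ with _ | _ | _ | _ | _ | ⟨_ | _ | _ | _ | _, _⟩ <;>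
    simp only [leftIntro, Option.mem_def, Option.some.injEq, reduceCtorEq] at hr <;> subst hr
  case box.atom ψ a =>
    have hrel : SeqElem.rel x a y ∈ S.ant.erase (SeqElem.lab x (.box (.atom a) ψ)) :=
      Finset.mem_erase.2 ⟨by simp, hy a ψ rfl⟩
    refine ⟨trivial, ⟨Finset.notMem_erase _ _, hrel⟩, trivial, ?_, by simp [prems],
      by simp [progressing]⟩
    rw [conc, Finset.insert_eq_self.2 hrel, ← hS]
  all_goals exact ⟨trivial, Finset.notMem_erase _ _, trivial, hS.symm, by simp [prems],
    by simp [progressing]⟩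

end RuleApp

namespace IsUnwinding

variable {S S₀ : Sequent} {U : Deriv} {p : List ℕ}

theorem not_expandsWithoutProgress (hU : IsUnwinding S U) (hp : U.openAt p = some S₀)
    (r : RuleApp) : ¬ r.ExpandsWithoutProgress S₀ := by
  rintro ⟨hlog, hcons, hwf, hconc, hne, hquiet⟩
  obtain ⟨-, -, honce, hmax⟩ := hU
  obtain ⟨base, tail, k, -, -, tr, τ, τ', hcov, -, -, htwice | ⟨hprog, -⟩⟩ :=
    hmax p S₀ hp r hlog hcons hwf hconc hne
  · obtain ⟨i, j, hij, hi, hj⟩ := htwice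
    exact hij (honce base tail tr hcov i j hi hj)
  · exact hquiet _ _ _ hprog

theorem suc_isAtomic_or_isIterated (hU : IsUnwinding S U) (hp : U.openAt p = some S₀)
    {x : Label} {φ : PDLFormula} (hx : SeqElem.lab x φ ∈ S₀.suc) :
    φ.isAtomic ∨ φ.isIterated := by
  by_contra! hφ
  obtain ⟨y, hy⟩ := Infinite.exists_notMem_finset
    (labs S₀.ant ∪ labs (S₀.suc.erase (SeqElem.lab x φ)) ∪ {x})
  simp only [Finset.mem_union, Finset.mem_singleton, not_or] at hy
  obtain ⟨r, hr⟩ := Option.isSome_iff_exists.1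
    (RuleApp.rightIntro_isSome hφ.1 hφ.2 x y S₀.ant (S₀.suc.erase (SeqElem.lab x φ)))
  exact hU.not_expandsWithoutProgress hp r
    (RuleApp.expandsWithoutProgress_of_mem_rightIntro hx ⟨hy.1.1, hy.1.2, hy.2⟩ hr)

theorem ant_isAtomic_or_isBasic (hU : IsUnwinding S U) (hp : U.openAt p = some S₀)
    {x : Label} {φ : PDLFormula} (hx : SeqElem.lab x φ ∈ S₀.ant) :
    φ.isAtomic ∨ ∃ a ψ, φ = .box (.atom a) ψ ∧ ∀ y, SeqElem.rel x a y ∉ S₀.ant := by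
  by_contra! hφ
  obtain ⟨hat, hsucc⟩ := hφ
  obtain ⟨y, hy⟩ : ∃ y, ∀ a ψ, φ = .box (.atom a) ψ → SeqElem.rel x a y ∈ S₀.ant := by
    by_cases hbasic : ∃ a ψ, φ = .box (.atom a) ψ
    · obtain ⟨a, ψ, rfl⟩ := hbasic
      obtain ⟨y, hy⟩ := hsucc a ψ rfl
      exact ⟨y, fun a' ψ' h => by cases h; exact hy⟩
    · exact ⟨0, fun a ψ h => (hbasic ⟨a, ψ, h⟩).elim⟩
  obtain ⟨r, hr⟩ := Option.isSome_iff_exists.1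
    (RuleApp.leftIntro_isSome hat x y (S₀.ant.erase (SeqElem.lab x φ)) S₀.suc)
  exact hU.not_expandsWithoutProgress hp r
    (RuleApp.expandsWithoutProgress_of_mem_leftIntro hx hy hr)

end IsUnwinding

theorem VPW.subset {S T : Sequent} (h : VPW S T) : T.ant ⊆ S.ant ∧ T.suc ⊆ S.suc := by
  cases h <;> simp [Finset.subset_insert]

theorem VPW.erase_rel {S : Sequent} {x z : Label} {a : ℕ} (hsuc : SeqElem.rel x a z ∈ S.suc)
    (hant : SeqElem.rel x a z ∉ S.ant) : VPW S ⟨S.ant, S.suc.erase (SeqElem.rel x a z)⟩ := by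
  have h := VPW.relRight S.ant (S.suc.erase (SeqElem.rel x a z)) x z a hant
    (Finset.notMem_erase _ _)
  rwa [Finset.insert_erase hsuc] at h

namespace Deriv

variable {D : Deriv} {p : List ℕ}

theorem openAt_eq_some_iff {S : Sequent} :
    D.openAt p = some S ↔ D.node p = some (Sum.inr S) := by
  unfold openAt
  rcases D.node p with _ | _ | _ <;> simp

theorem seqAt_of_node_inl {r : RuleApp} (h : D.node p = some (Sum.inl r)) :
    D.seqAt p = some r.conc := by
  simp [seqAt, h, DNode.concl]

theorem seqAt_of_node_inr {S : Sequent} (h : D.node p = some (Sum.inr S)) :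
    D.seqAt p = some S := by
  simp [seqAt, h, DNode.concl]

theorem seqAt_append_zero {r : RuleApp} {S : Sequent} (h : D.node p = some (Sum.inl r))
    (hprems : r.prems = [S]) : D.seqAt (p ++ [0]) = some S := by
  simpa [seqAt, hprems] using D.children p r h 0

end Deriv

theorem seqAt_subset_of_VPW_chain {D : Deriv} {p : List ℕ} {S₀ : Sequent} {n : ℕ}
    (h₀ : D.seqAt p = some S₀)
    (hchain : ∀ k < n, ∃ r S₂, D.node (p ++ List.replicate k 0) = some (Sum.inl r) ∧
      r.prems = [S₂] ∧ VPW r.conc S₂) :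
    ∀ m ≤ n, ∃ T : Sequent, D.seqAt (p ++ List.replicate m 0) = some T ∧
      T.ant ⊆ S₀.ant ∧ T.suc ⊆ S₀.suc := by
  intro m
  induction m with
  | zero => exact fun _ => ⟨S₀, by simpa using h₀, subset_rfl, subset_rfl⟩
  | succ m ih =>
    intro hm
    obtain ⟨T, hT, hant, hsuc⟩ := ih (by omega)
    obtain ⟨r, S₂, hr, hprems, hvpw⟩ := hchain m (by omega)
    obtain rfl : r.conc = T := by simpa [Deriv.seqAt_of_node_inl hr] using hT
    refine ⟨S₂, ?_, hvpw.subset.1.trans hant, hvpw.subset.2.trans hsuc⟩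
    rw [List.replicate_succ', ← List.append_assoc]
    exact Deriv.seqAt_append_zero hr hprems

theorem WeakCapAt.openAt_append {D : Deriv} {p q : List ℕ} {S₀ S' : Sequent}
    (h : WeakCapAt D p S₀) (hq : D.openAt (p ++ q) = some S') :
    S'.ant ⊆ S₀.ant ∧ S'.suc ⊆ S₀.suc ∧ ∀ T, ¬ VPW S' T := by
  obtain ⟨h₀, n, hchain, ⟨S₁, hleaf, hirr⟩, hall⟩ := h
  have hnode := Deriv.openAt_eq_some_iff.1 hq
  obtain ⟨k, hkn, rfl⟩ := hall q (by simp [hnode])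
  obtain rfl : k = n := by
    refine hkn.eq_or_lt.elim id fun hlt => ?_
    obtain ⟨r, -, hr, -⟩ := hchain k hlt
    simp [hr] at hnode
  obtain rfl : S₁ = S' := by simpa [hleaf] using hnode
  obtain ⟨T, hT, hant, hsuc⟩ := seqAt_subset_of_VPW_chain h₀
    (fun k hk => (hchain k hk).imp fun r ⟨S₂, hr, _, hprems, hvpw⟩ => ⟨S₂, hr, hprems, hvpw⟩)
    k le_rfl
  obtain rfl : T = S₁ := by simpa [Deriv.seqAt_of_node_inr hleaf] using hT.symm
  exact ⟨hant, hsuc, hirr⟩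

theorem IsCappedUnwinding.exists_weakCapAt {S S' : Sequent} {C : Deriv} {p : List ℕ}
    (h : IsCappedUnwinding S C) (hp : C.openAt p = some S') :
    ∃ U p₁ q S₀, IsUnwinding S U ∧ U.openAt p₁ = some S₀ ∧ p = p₁ ++ q ∧ ¬ closable S₀ ∧
      WeakCapAt C p₁ S₀ := by
  obtain ⟨U, hU, hrule, hleaf, hnone⟩ := h
  have hnode := Deriv.openAt_eq_some_iff.1 hp
  obtain ⟨p₁, S₀, ⟨q, rfl⟩, hU₁⟩ : ∃ p₁ S₀, p₁ <+: p ∧ U.node p₁ = some (Sum.inr S₀) := by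
    by_contra! hno
    rcases hUp : U.node p with _ | r | T
    · simp [hnone p hUp hno] at hnode
    · simp [hrule p r hUp] at hnode
    · exact hno p T List.prefix_rfl hUp
  have hcl : ¬ closable S₀ := fun hcl => by
    simpa [hp] using ((hleaf p₁ S₀ hU₁).1 hcl).2.2.1 q
  exact ⟨U, p₁, q, S₀, hU, Deriv.openAt_eq_some_iff.2 hU₁, rfl, hcl,
    (hleaf p₁ S₀ hU₁).2 hcl⟩

/-- **Every open leaf of a capped unwinding is a normal sequent.** -/
theorem capped_unwinding_leaves_normal (S : Sequent) (C : Deriv)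
    (h : IsCappedUnwinding S C) :
    ∀ p S', C.openAt p = some S' → NormalSeq S' := by
  intro p S' hp
  obtain ⟨U, p₁, q, S₀, hU, hleaf, rfl, hcl, hcap⟩ := h.exists_weakCapAt hp
  obtain ⟨hant, hsuc, hirr⟩ := hcap.openAt_append hp
  have hdisj : ∀ A ∈ S'.ant, A ∉ S'.suc := fun A hA hA' =>
    hcl (Or.inr ⟨A, hant hA, hsuc hA'⟩)
  refine ⟨hdisj, fun A hA => ?_, fun A hA => ?_⟩
  · rcases A with ⟨x, a, z⟩ | ⟨x, φ⟩
    · exact (hirr _ (VPW.erase_rel hA (fun h => hdisj _ h hA))).elim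
    · exact ⟨x, φ, rfl, hU.suc_isAtomic_or_isIterated hleaf (hsuc hA)⟩
  · rcases A with _ | ⟨x, φ⟩
    · exact Or.inl trivial
    · refine Or.inr ⟨x, φ, rfl, ?_⟩
      rcases hU.ant_isAtomic_or_isBasic hleaf (hant hA) with hat | ⟨a, ψ, rfl, hnone⟩
      · exact Or.inl hat
      · exact Or.inr ⟨a, ψ, rfl, fun y hy => hnone y (hant hy)⟩
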